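/- Let (a_l) be a sequence of reals in [−1,1] indexed by primes l, let n ≥ 1, and let C > 0. Suppose that for all x with 2^n ≤ x ≤ 2^{n+1}, both |#{primes l < x : a_l = +1} − (1/2)#{primes l < x}| ≤ C and |#{primes l < x : a_l = −1} − (1/2)#{primes l < x}| ≤ C. Then log(∏_{2^n ≤ l < 2^{n+1}, l prime} (1 + a_l/l)) = O(C·2^{−n}), with an absolute implied constant. -/

import Mathlib

/-!
Write `N = 2^n` and `t_l = a_l / l`, so `|t_l| ≤ 1/N`. Then `log ∏ (1 + t_l) = ∑ t_l + O(1/N)`,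
as there are at most `N` terms and `log (1 + t) = t + O(t²)`. In `∑ t_l`, the primes with
`a_l = ±1` contribute `∑ σ_l / l`, where the partial sums of the signs `σ_l` are `O(C)` on
`[N, 2N]`; Abel summation against the decreasing weights `1/l` gives `O(C/N)`. Taking `x = 2N`,
at most `2C` primes have `a_l ≠ ±1`, so they contribute `O(C/N)` as well. Finally the `O(1/N)`
error is `O(C/N)`: by Bertrand there is a prime `p` with `N < p < 2N`, and since the number of
primes below `x` grows by one from `x = p` to `x = p + 1`, the hypothesis at `p` and `p + 1`
forces `C ≥ 1/4`.
-/

open Finset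

theorem abs_sum_Ico_mul_le_of_antitoneOn {f g : ℕ → ℝ} {m n : ℕ} {B : ℝ} (hmn : m < n)
    (hf : AntitoneOn f (Set.Icc m n)) (hfn : 0 ≤ f n)
    (hB : ∀ k ∈ Set.Icc m n, |∑ i ∈ range k, g i| ≤ B) :
    |∑ i ∈ Ico m n, f i * g i| ≤ 2 * B * f m := by
  have hmem : ∀ {k}, m ≤ k → k ≤ n → k ∈ Set.Icc m n := fun h₁ h₂ => ⟨h₁, h₂⟩
  have hfn1 : 0 ≤ f (n - 1) :=
    hfn.trans (hf (hmem (by omega) (by omega)) (hmem hmn.le le_rfl) (by omega))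
  have hfm : f (n - 1) ≤ f m := hf (hmem le_rfl hmn.le) (hmem (by omega) (by omega)) (by omega)
  have hstep : ∀ i ∈ Ico m (n - 1),
      |(f (i + 1) - f i) * ∑ j ∈ range (i + 1), g j| ≤ (f i - f (i + 1)) * B := by
    intro i hi
    rw [mem_Ico] at hi
    have hfi : f (i + 1) ≤ f i := hf (hmem hi.1 (by omega)) (hmem (by omega) (by omega)) (by omega)
    rw [abs_mul, abs_of_nonpos (by linarith), neg_sub]
    exact mul_le_mul_of_nonneg_left (hB _ (hmem (by omega) (by omega))) (by linarith)
  have htail : |∑ i ∈ Ico m (n - 1), (f (i + 1) - f i) * ∑ j ∈ range (i + 1), g j|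
      ≤ (f m - f (n - 1)) * B := by
    calc _ ≤ ∑ i ∈ Ico m (n - 1), (f i - f (i + 1)) * B :=
          (abs_sum_le_sum_abs _ _).trans (sum_le_sum hstep)
      _ = (f m - f (n - 1)) * B := by
          have htel := sum_Ico_sub f (show m ≤ n - 1 by omega)
          rw [sum_sub_distrib] at htel
          rw [← sum_mul, sum_sub_distrib]
          congr 1
          linarith
  have hlast : |f (n - 1) * ∑ i ∈ range n, g i| ≤ f (n - 1) * B := by
    rw [abs_mul, abs_of_nonneg hfn1]
    exact mul_le_mul_of_nonneg_left (hB n (hmem hmn.le le_rfl)) hfn1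
  have hfirst : |f m * ∑ i ∈ range m, g i| ≤ f m * B := by
    rw [abs_mul, abs_of_nonneg (hfn1.trans hfm)]
    exact mul_le_mul_of_nonneg_left (hB m (hmem le_rfl hmn.le)) (hfn1.trans hfm)
  have hparts := sum_Ico_by_parts f g hmn
  simp only [smul_eq_mul] at hparts
  rw [hparts]
  have := abs_sub (f (n - 1) * ∑ i ∈ range n, g i - f m * ∑ i ∈ range m, g i)
    (∑ i ∈ Ico m (n - 1), (f (i + 1) - f i) * ∑ j ∈ range (i + 1), g j)
  have := abs_sub (f (n - 1) * ∑ i ∈ range n, g i) (f m * ∑ i ∈ range m, g i)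
  linarith

theorem abs_log_one_add_sub_le {t : ℝ} (ht : |t| ≤ 1 / 2) :
    |Real.log (1 + t) - t| ≤ 2 * t ^ 2 := by
  have h := Real.abs_log_sub_add_sum_range_le (x := -t) (by rw [abs_neg]; linarith) 1
  simp only [range_one, sum_singleton, abs_neg, sub_neg_eq_add] at h
  calc |Real.log (1 + t) - t| = |(-t) ^ (0 + 1) / ((0 : ℕ) + 1) + Real.log (1 + t)| := by
        congr 1; push_cast; ring
    _ ≤ |t| ^ (1 + 1) / (1 - |t|) := h
    _ ≤ 2 * t ^ 2 := by
        rw [div_le_iff₀ (by linarith), sq_abs]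
        nlinarith [sq_nonneg t]

theorem abs_log_prod_one_add_sub_sum_le {ι : Type*} (s : Finset ι) (t : ι → ℝ) {δ : ℝ}
    (hδ : δ ≤ 1 / 2) (ht : ∀ i ∈ s, |t i| ≤ δ) :
    |Real.log (∏ i ∈ s, (1 + t i)) - ∑ i ∈ s, t i| ≤ 2 * #s * δ ^ 2 := by
  have hne : ∀ i ∈ s, 1 + t i ≠ 0 := fun i hi => by
    linarith [neg_abs_le (t i), ht i hi]
  rw [Real.log_prod hne, ← sum_sub_distrib]
  calc _ ≤ ∑ i ∈ s, |Real.log (1 + t i) - t i| := abs_sum_le_sum_abs _ _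
    _ ≤ ∑ i ∈ s, 2 * δ ^ 2 := sum_le_sum fun i hi => by
        obtain ⟨hlo, hhi⟩ := abs_le.mp (ht i hi)
        nlinarith [abs_log_one_add_sub_le ((ht i hi).trans hδ), sq_le_sq' hlo hhi]
    _ = 2 * #s * δ ^ 2 := by rw [sum_const, nsmul_eq_mul]; ring

theorem abs_div_natCast_le_inv {x : ℝ} {l N : ℕ} (hx : |x| ≤ 1) (hN : 0 < N) (hNl : N ≤ l) :
    |x / l| ≤ (N : ℝ)⁻¹ := by
  rw [abs_div, Nat.abs_cast, ← one_div]
  exact div_le_div₀ zero_le_one hx (Nat.cast_pos.mpr hN) (Nat.cast_le.mpr hNl)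

section PrimeSigns

variable (a : ℕ → ℝ)

noncomputable def primeSign (l : ℕ) : ℝ :=
  (if l.Prime ∧ a l = 1 then 1 else 0) - (if l.Prime ∧ a l = -1 then 1 else 0)

theorem sum_primeSign (s : Finset ℕ) :
    ∑ l ∈ s, primeSign a l = #{l ∈ s | l.Prime ∧ a l = 1} - #{l ∈ s | l.Prime ∧ a l = -1} := by
  simp only [primeSign, sum_sub_distrib, sum_boole]

theorem card_filter_prime_eq_add (s : Finset ℕ) :
    #{l ∈ s | l.Prime ∧ a l = 1} + #{l ∈ s | l.Prime ∧ a l = -1}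
      + #{l ∈ s | l.Prime ∧ a l ≠ 1 ∧ a l ≠ -1} = #{l ∈ s | l.Prime} := by
  simp only [card_filter, ← sum_add_distrib]
  refine sum_congr rfl fun l _ => ?_
  by_cases h₁ : a l = 1 <;> by_cases h₂ : a l = -1 <;> norm_num [h₁, h₂]

theorem sum_filter_prime_div_eq (s : Finset ℕ) :
    ∑ l ∈ s with l.Prime, a l / l = ∑ l ∈ s, (l : ℝ)⁻¹ * primeSign a l
      + ∑ l ∈ s with l.Prime ∧ a l ≠ 1 ∧ a l ≠ -1, a l / l := by
  rw [sum_filter, sum_filter, ← sum_add_distrib]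
  refine sum_congr rfl fun l _ => ?_
  by_cases hp : l.Prime <;> by_cases h₁ : a l = 1 <;> by_cases h₂ : a l = -1 <;>
    norm_num [primeSign, hp, h₁, h₂, div_eq_inv_mul]

def BalancedSigns (C : ℝ) (N M : ℕ) : Prop :=
  ∀ x : ℕ, N ≤ x → x ≤ M →
    |(((Finset.range x).filter (fun l => l.Prime ∧ a l = 1)).card : ℝ) -
        (((Finset.range x).filter Nat.Prime).card : ℝ) / 2| ≤ C ∧
      |(((Finset.range x).filter (fun l => l.Prime ∧ a l = -1)).card : ℝ) -
        (((Finset.range x).filter Nat.Prime).card : ℝ) / 2| ≤ C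

namespace BalancedSigns

variable {a} {C : ℝ} {N M : ℕ}

theorem abs_sum_range_primeSign_le (h : BalancedSigns a C N M) {x : ℕ} (hNx : N ≤ x)
    (hxM : x ≤ M) : |∑ l ∈ range x, primeSign a l| ≤ 2 * C := by
  obtain ⟨hplus, hminus⟩ := h x hNx hxM
  rw [sum_primeSign, abs_le]
  rw [abs_le] at hplus hminus
  constructor <;> linarith

theorem card_exceptional_le (h : BalancedSigns a C N M) (hNM : N ≤ M) :
    (#{l ∈ range M | l.Prime ∧ a l ≠ 1 ∧ a l ≠ -1} : ℝ) ≤ 2 * C := by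
  obtain ⟨hplus, hminus⟩ := h M hNM le_rfl
  have hsplit : (#{l ∈ range M | l.Prime ∧ a l = 1} : ℝ) + #{l ∈ range M | l.Prime ∧ a l = -1}
      + #{l ∈ range M | l.Prime ∧ a l ≠ 1 ∧ a l ≠ -1} = #{l ∈ range M | l.Prime} := by
    exact_mod_cast card_filter_prime_eq_add a (range M)
  linarith [(abs_le.mp hplus).1, (abs_le.mp hminus).1]

theorem quarter_le (h : BalancedSigns a C N M) {p : ℕ} (hp : p.Prime) (hNp : N ≤ p)
    (hpM : p < M) : 1 / 4 ≤ C := by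
  obtain ⟨hbefore, -⟩ := h p hNp hpM.le
  obtain ⟨hafter, -⟩ := h (p + 1) (by omega) hpM
  have hπ : #{l ∈ range (p + 1) | l.Prime} = #{l ∈ range p | l.Prime} + 1 := by
    rw [range_add_one, filter_insert, if_pos hp, card_insert_of_notMem (by simp)]
  have hplus : #{l ∈ range (p + 1) | l.Prime ∧ a l = 1} = #{l ∈ range p | l.Prime ∧ a l = 1} ∨
      #{l ∈ range (p + 1) | l.Prime ∧ a l = 1} = #{l ∈ range p | l.Prime ∧ a l = 1} + 1 := by
    rw [range_add_one, filter_insert]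
    split_ifs
    · exact Or.inr (card_insert_of_notMem (by simp))
    · exact Or.inl rfl
  rw [hπ] at hafter
  rw [abs_le] at hbefore hafter
  rcases hplus with hc | hc <;> rw [hc] at hafter <;> push_cast at hafter <;> linarith

theorem abs_sum_div_le (h : BalancedSigns a C N M) (ha : ∀ l, |a l| ≤ 1) (hN : 0 < N)
    (hNM : N < M) : |∑ l ∈ Ico N M with l.Prime, a l / l| ≤ 6 * C * (N : ℝ)⁻¹ := by
  have hsign : |∑ l ∈ Ico N M, (l : ℝ)⁻¹ * primeSign a l| ≤ 2 * (2 * C) * (N : ℝ)⁻¹ :=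
    abs_sum_Ico_mul_le_of_antitoneOn (f := fun l : ℕ => (l : ℝ)⁻¹) hNM
      (fun x hx y _ hxy => inv_anti₀ (Nat.cast_pos.mpr (hN.trans_le hx.1)) (Nat.cast_le.mpr hxy))
      (by positivity) fun k hk => h.abs_sum_range_primeSign_le hk.1 hk.2
  have hexc : |∑ l ∈ Ico N M with l.Prime ∧ a l ≠ 1 ∧ a l ≠ -1, a l / l| ≤ 2 * C * (N : ℝ)⁻¹ := by
    calc _ ≤ ∑ l ∈ Ico N M with l.Prime ∧ a l ≠ 1 ∧ a l ≠ -1, (N : ℝ)⁻¹ :=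
          (abs_sum_le_sum_abs _ _).trans <| sum_le_sum fun l hl =>
            abs_div_natCast_le_inv (ha l) hN (mem_Ico.mp (mem_filter.mp hl).1).1
      _ = #{l ∈ Ico N M | l.Prime ∧ a l ≠ 1 ∧ a l ≠ -1} * (N : ℝ)⁻¹ := by
          rw [sum_const, nsmul_eq_mul]
      _ ≤ #{l ∈ range M | l.Prime ∧ a l ≠ 1 ∧ a l ≠ -1} * (N : ℝ)⁻¹ := by
          gcongr
          intro l
          simp only [mem_Ico, mem_range]
          omega
      _ ≤ 2 * C * (N : ℝ)⁻¹ := by gcongr; exact h.card_exceptional_le hNM.le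
  rw [sum_filter_prime_div_eq]
  linarith [abs_add_le (∑ l ∈ Ico N M, (l : ℝ)⁻¹ * primeSign a l)
    (∑ l ∈ Ico N M with l.Prime ∧ a l ≠ 1 ∧ a l ≠ -1, a l / l)]

end BalancedSigns

end PrimeSigns

theorem stmt3 :
    ∃ A > (0:ℝ), ∀ (a : ℕ → ℝ) (n : ℕ) (C : ℝ), 1 ≤ n → 0 < C →
    (∀ l, -1 ≤ a l ∧ a l ≤ 1) →
    (∀ x : ℕ, 2^n ≤ x → x ≤ 2^(n+1) →
      |(((Finset.range x).filter (fun l => l.Prime ∧ a l = 1)).card : ℝ) -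
        (((Finset.range x).filter Nat.Prime).card : ℝ) / 2| ≤ C ∧
      |(((Finset.range x).filter (fun l => l.Prime ∧ a l = -1)).card : ℝ) -
        (((Finset.range x).filter Nat.Prime).card : ℝ) / 2| ≤ C) →
    |Real.log (∏ l ∈ (Finset.Ico (2^n) (2^(n+1))).filter Nat.Prime, (1 + a l / l))|
      ≤ A * C * 2^(-(n:ℝ)) := by
  refine ⟨14, by norm_num, fun a n C hn _ ha hx => ?_⟩
  set N : ℕ := 2 ^ n
  have hM : 2 ^ (n + 1) = 2 * N := pow_succ' 2 n
  have hN : 2 ≤ N := Nat.le_self_pow (by omega) 2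
  have hbal : BalancedSigns a C N (2 * N) := hM ▸ hx
  have ha' : ∀ l, |a l| ≤ 1 := fun l => abs_le.mpr (ha l)
  obtain ⟨p, hp, hNp, hp2N⟩ := Nat.exists_prime_lt_and_le_two_mul N (by omega)
  have hpM : p < 2 * N := hp2N.lt_of_ne fun h =>
    absurd ((Nat.prime_dvd_prime_iff_eq Nat.prime_two hp).mp (h ▸ dvd_mul_right 2 N)) (by omega)
  have hC : 1 / 4 ≤ C := hbal.quarter_le hp hNp.le hpM
  have hcard : (#{l ∈ Ico N (2 * N) | l.Prime} : ℝ) ≤ N := by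
    exact_mod_cast (card_filter_le _ _).trans (by rw [Nat.card_Ico]; omega)
  have hlog := abs_log_prod_one_add_sub_sum_le {l ∈ Ico N (2 * N) | l.Prime} (fun l => a l / l)
    (δ := (N : ℝ)⁻¹) (by rw [one_div]; exact inv_anti₀ two_pos (by exact_mod_cast hN)) fun l hl =>
      abs_div_natCast_le_inv (ha' l) (by omega) (mem_Ico.mp (mem_filter.mp hl).1).1
  have hsum := hbal.abs_sum_div_le ha' (by omega) (by omega)
  have herr : 2 * #{l ∈ Ico N (2 * N) | l.Prime} * (N : ℝ)⁻¹ ^ 2 ≤ 2 * (N : ℝ)⁻¹ := by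
    calc _ ≤ 2 * N * (N : ℝ)⁻¹ ^ 2 := by gcongr
      _ = 2 * (N : ℝ)⁻¹ := by field_simp
  have hCN := mul_le_mul_of_nonneg_right hC (by positivity : (0 : ℝ) ≤ (N : ℝ)⁻¹)
  rw [Real.rpow_neg zero_le_two, Real.rpow_natCast, hM, show (2 : ℝ) ^ n = N by simp [N]]
  linarith [abs_sub_abs_le_abs_sub (Real.log (∏ l ∈ Ico N (2 * N) with l.Prime, (1 + a l / l)))
    (∑ l ∈ Ico N (2 * N) with l.Prime, a l / l)]
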